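/- Let f = h + ḡ be a locally univalent harmonic mapping with f(α) = 0, N = h'̄ f − conj(g' f), J = |h'|²−|g'|², and define A = (h'̄ − (h''̄/2)(N̄/J)) f − (g'̄ − (g''̄/2)(N̄/J)) f̄ and B = |h' − (h''/2)(N/J)|² − |g' − (g''/2)(N/J)|², and the harmonic Halley map F(z) = z − A(z)/B(z). Then F(α) = α, ∂F/∂z(α) = 0, and ∂²F/∂z²(α) = 0. -/

import Mathlib

open Complex ComplexConjugate

/-- The Wirtinger derivative `∂f/∂z = (1/2)(∂f/∂x - i ∂f/∂y)`. -/
noncomputable def wirtingerZ (f : ℂ → ℂ) (z : ℂ) : ℂ :=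
  (fderiv ℝ f z 1 - Complex.I * fderiv ℝ f z Complex.I) / 2

/-- The Jacobian `J = |h'|² - |g'|²` of the harmonic map `f = h + conj g`. -/
noncomputable def jac (h g : ℂ → ℂ) (z : ℂ) : ℝ :=
  ‖deriv h z‖ ^ 2 - ‖deriv g z‖ ^ 2

/-- The Jacobian, viewed as a complex-valued function. -/
noncomputable def jacC (h g : ℂ → ℂ) (z : ℂ) : ℂ := (jac h g z : ℂ)

/-- The harmonic pre-Schwarzian derivative `P_H(f) = ∂_z log J` of `f = h + conj g`. -/
noncomputable def preSchwarzianH (h g : ℂ → ℂ) (z : ℂ) : ℂ :=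
  wirtingerZ (fun w => (Real.log (jac h g w) : ℂ)) z

/-- The harmonic Schwarzian derivative `S_H(f) = ∂_z(P_H(f)) - (1/2)(P_H(f))²`. -/
noncomputable def schwarzianH (h g : ℂ → ℂ) (z : ℂ) : ℂ :=
  wirtingerZ (preSchwarzianH h g) z - (1 / 2) * (preSchwarzianH h g z) ^ 2

/-- The classical Schwarzian derivative `S(h) = h'''/h' - (3/2)(h''/h')²`. -/
noncomputable def schwarzian (φ : ℂ → ℂ) (z : ℂ) : ℂ :=
  deriv (deriv (deriv φ)) z / deriv φ z - (3 / 2) * (deriv (deriv φ) z / deriv φ z) ^ 2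

/-- The harmonic map `f = h + conj g`. -/
noncomputable def harm (h g : ℂ → ℂ) (z : ℂ) : ℂ := h z + conj (g z)

/-- `N(z) = conj(h'(z)) f(z) - conj(g'(z) f(z))` for `f = h + conj g`. -/
noncomputable def Nmap (h g : ℂ → ℂ) (z : ℂ) : ℂ :=
  conj (deriv h z) * harm h g z - conj (deriv g z * harm h g z)

/-- The harmonic Newton map `F(z) = z - N(z)/J(z)`. -/
noncomputable def newtonMapH (h g : ℂ → ℂ) (z : ℂ) : ℂ :=
  z - Nmap h g z / jacC h g z

/-- The numerator `A` of the harmonic Halley correction. -/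
noncomputable def Amap (h g : ℂ → ℂ) (z : ℂ) : ℂ :=
  (conj (deriv h z) - conj (deriv (deriv h) z) / 2 * (conj (Nmap h g z) / jacC h g z)) *
      harm h g z -
    (conj (deriv g z) - conj (deriv (deriv g) z) / 2 * (conj (Nmap h g z) / jacC h g z)) *
      conj (harm h g z)

/-- The denominator `B` of the harmonic Halley correction. -/
noncomputable def Bmap (h g : ℂ → ℂ) (z : ℂ) : ℂ :=
  ((‖deriv h z - deriv (deriv h) z / 2 * (Nmap h g z / jacC h g z)‖ ^ 2 -
      ‖deriv g z - deriv (deriv g) z / 2 * (Nmap h g z / jacC h g z)‖ ^ 2 : ℝ) : ℂ)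

/-- The harmonic Halley map `F(z) = z - A(z)/B(z)`. -/
noncomputable def halleyMapH (h g : ℂ → ℂ) (z : ℂ) : ℂ :=
  z - Amap h g z / Bmap h g z

/-! ### Wirtinger calculus infrastructure -/

noncomputable def wlin (a b : ℂ) : ℂ →L[ℝ] ℂ :=
  a • (ContinuousLinearMap.id ℝ ℂ) + b • (Complex.conjCLE.toContinuousLinearMap)

@[simp] lemma wlin_apply (a b x : ℂ) : wlin a b x = a * x + b * (starRingEnd ℂ) x := by
  simp [wlin, Complex.conjCLE]

lemma clm_ext1I {L M : ℂ →L[ℝ] ℂ} (h1 : L 1 = M 1) (hI : L Complex.I = M Complex.I) : L = M := by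
  apply ContinuousLinearMap.coe_injective
  apply Module.Basis.ext Complex.basisOneI
  intro i
  fin_cases i <;> simpa using (by assumption : _)

def HasW (f : ℂ → ℂ) (a b : ℂ) (z : ℂ) : Prop := HasFDerivAt f (wlin a b) z

lemma HasW.wz {f : ℂ → ℂ} {a b z : ℂ} (hf : HasW f a b z) : wirtingerZ f z = a := by
  rw [wirtingerZ, HasFDerivAt.fderiv hf]
  simp [Complex.conj_I]
  linear_combination (b - a) / 2 * Complex.I_sq

lemma HasW.wz' {f f' : ℂ → ℂ} {a b z : ℂ} (hf : HasW f a b z) (hf' : f' = f) :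
    wirtingerZ f' z = a := hf' ▸ hf.wz

lemma HasW.diffAt {f : ℂ → ℂ} {a b z : ℂ} (hf : HasW f a b z) : DifferentiableAt ℝ f z :=
  HasFDerivAt.differentiableAt hf

lemma HasW.congr_coef {f : ℂ → ℂ} {a b a' b' z : ℂ} (hf : HasW f a b z)
    (ha : a = a') (hb : b = b') : HasW f a' b' z := ha ▸ hb ▸ hf

lemma hasW_const (c z : ℂ) : HasW (fun _ => c) 0 0 z := by
  have h := hasFDerivAt_const (𝕜 := ℝ) c z
  have e : (0 : ℂ →L[ℝ] ℂ) = wlin 0 0 := by apply clm_ext1I <;> simp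
  show HasFDerivAt _ (wlin _ _) _
  exact e ▸ h

lemma hasW_id (z : ℂ) : HasW (fun w => w) 1 0 z := by
  have h := hasFDerivAt_id (𝕜 := ℝ) z
  have e : (ContinuousLinearMap.id ℝ ℂ) = wlin 1 0 := by apply clm_ext1I <;> simp
  show HasFDerivAt _ (wlin _ _) _
  exact e ▸ h

lemma HasW.add {f g : ℂ → ℂ} {a b c d z : ℂ} (hf : HasW f a b z) (hg : HasW g c d z) :
    HasW (fun w => f w + g w) (a + c) (b + d) z := by
  have h := HasFDerivAt.add hf hg
  have e : wlin a b + wlin c d = wlin (a + c) (b + d) := by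
    apply clm_ext1I <;> simp <;> ring
  show HasFDerivAt _ (wlin _ _) _
  exact e ▸ h

lemma HasW.neg {f : ℂ → ℂ} {a b z : ℂ} (hf : HasW f a b z) :
    HasW (fun w => -f w) (-a) (-b) z := by
  have h := HasFDerivAt.neg hf
  have e : -wlin a b = wlin (-a) (-b) := by
    apply clm_ext1I <;> simp <;> ring
  show HasFDerivAt _ (wlin _ _) _
  exact e ▸ h

lemma HasW.sub {f g : ℂ → ℂ} {a b c d z : ℂ} (hf : HasW f a b z) (hg : HasW g c d z) :
    HasW (fun w => f w - g w) (a - c) (b - d) z := by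
  have h := HasFDerivAt.sub hf hg
  have e : wlin a b - wlin c d = wlin (a - c) (b - d) := by
    apply clm_ext1I <;> simp <;> ring
  show HasFDerivAt _ (wlin _ _) _
  exact e ▸ h

lemma HasW.mul {f g : ℂ → ℂ} {a b c d z : ℂ} (hf : HasW f a b z) (hg : HasW g c d z) :
    HasW (fun w => f w * g w) (a * g z + f z * c) (b * g z + f z * d) z := by
  have h := HasFDerivAt.mul hf hg
  have e : f z • wlin c d + g z • wlin a b = wlin (a * g z + f z * c) (b * g z + f z * d) := by
    apply clm_ext1I <;> simp <;> ring
  show HasFDerivAt _ (wlin _ _) _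
  exact e ▸ h

lemma HasW.conj {f : ℂ → ℂ} {a b z : ℂ} (hf : HasW f a b z) :
    HasW (fun w => (starRingEnd ℂ) (f w)) ((starRingEnd ℂ) b) ((starRingEnd ℂ) a) z := by
  have hc : HasFDerivAt (fun w : ℂ => (starRingEnd ℂ) w)
      (Complex.conjCLE.toContinuousLinearMap) (f z) :=
    Complex.conjCLE.toContinuousLinearMap.hasFDerivAt
  have h := HasFDerivAt.comp z hc hf
  have e : (Complex.conjCLE.toContinuousLinearMap).comp (wlin a b)
      = wlin ((starRingEnd ℂ) b) ((starRingEnd ℂ) a) := by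
    apply clm_ext1I <;> simp [Complex.conjCLE, Complex.conj_I] <;> ring
  show HasFDerivAt _ (wlin _ _) _
  exact e ▸ h

lemma hasW_holo {f : ℂ → ℂ} {z : ℂ} (hf : DifferentiableAt ℂ f z) :
    HasW f (deriv f z) 0 z := by
  have h1 : HasFDerivAt f (ContinuousLinearMap.smulRight (1 : ℂ →L[ℂ] ℂ) (deriv f z)) z :=
    hf.hasDerivAt.hasFDerivAt
  have h2 := h1.restrictScalars ℝ
  have e : (ContinuousLinearMap.smulRight (1 : ℂ →L[ℂ] ℂ) (deriv f z)).restrictScalars ℝ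
      = wlin (deriv f z) 0 := by
    apply clm_ext1I <;> simp <;> ring
  show HasFDerivAt _ (wlin _ _) _
  exact e ▸ h2

lemma HasW.inv {f : ℂ → ℂ} {a b z : ℂ} (hf : HasW f a b z) (h0 : f z ≠ 0) :
    HasW (fun w => (f w)⁻¹) (-(a / (f z * f z))) (-(b / (f z * f z))) z := by
  have hi : HasFDerivAt (fun w : ℂ => w⁻¹)
      (-ContinuousLinearMap.mulLeftRight ℝ ℂ (f z)⁻¹ (f z)⁻¹) (f z) :=
    hasFDerivAt_inv' (𝕜 := ℝ) h0
  have h := HasFDerivAt.comp z hi hf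
  have e : (-ContinuousLinearMap.mulLeftRight ℝ ℂ (f z)⁻¹ (f z)⁻¹).comp (wlin a b)
      = wlin (-(a / (f z * f z))) (-(b / (f z * f z))) := by
    apply clm_ext1I <;> simp [Complex.conj_I] <;> field_simp <;> ring
  show HasFDerivAt _ (wlin _ _) _
  exact e ▸ h

lemma HasW.div {f g : ℂ → ℂ} {a b c d z : ℂ} (hf : HasW f a b z) (hg : HasW g c d z)
    (h0 : g z ≠ 0) :
    HasW (fun w => f w / g w)
      ((a * g z - f z * c) / (g z * g z)) ((b * g z - f z * d) / (g z * g z)) z := by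
  have h := hf.mul (hg.inv h0)
  have e1 : a * (g z)⁻¹ + f z * -(c / (g z * g z)) = (a * g z - f z * c) / (g z * g z) := by
    field_simp; ring
  have e2 : b * (g z)⁻¹ + f z * -(d / (g z * g z)) = (b * g z - f z * d) / (g z * g z) := by
    field_simp; ring
  simpa [div_eq_mul_inv] using h.congr_coef e1 e2

lemma wirtingerZ_congr {f g : ℂ → ℂ} {z : ℂ} (h : f =ᶠ[nhds z] g) :
    wirtingerZ f z = wirtingerZ g z := by
  rw [wirtingerZ, wirtingerZ, Filter.EventuallyEq.fderiv_eq h]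

/-! ### Auxiliary coefficient functions -/

noncomputable def Nb (h g : ℂ → ℂ) (z : ℂ) : ℂ :=
  conj (deriv (deriv h) z) * harm h g z + conj (deriv h z) * conj (deriv g z) -
    (conj (deriv (deriv g) z) * conj (harm h g z) + conj (deriv g z) * conj (deriv h z))

noncomputable def J1 (h g : ℂ → ℂ) (z : ℂ) : ℂ :=
  deriv (deriv h) z * conj (deriv h z) - deriv (deriv g) z * conj (deriv g z)

noncomputable def w1 (h g : ℂ → ℂ) (z : ℂ) : ℂ :=
  (jacC h g z * jacC h g z - Nmap h g z * J1 h g z) / (jacC h g z * jacC h g z)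

noncomputable def wb (h g : ℂ → ℂ) (z : ℂ) : ℂ :=
  (Nb h g z * jacC h g z - Nmap h g z * conj (J1 h g z)) / (jacC h g z * jacC h g z)

noncomputable def uF (h g : ℂ → ℂ) (z : ℂ) : ℂ :=
  deriv h z - deriv (deriv h) z / 2 * (Nmap h g z / jacC h g z)

noncomputable def vF (h g : ℂ → ℂ) (z : ℂ) : ℂ :=
  deriv g z - deriv (deriv g) z / 2 * (Nmap h g z / jacC h g z)

noncomputable def u1 (h g : ℂ → ℂ) (z : ℂ) : ℂ :=
  deriv (deriv h) z - (deriv (deriv (deriv h)) z / 2 * (Nmap h g z / jacC h g z) +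
    deriv (deriv h) z / 2 * w1 h g z)

noncomputable def v1 (h g : ℂ → ℂ) (z : ℂ) : ℂ :=
  deriv (deriv g) z - (deriv (deriv (deriv g)) z / 2 * (Nmap h g z / jacC h g z) +
    deriv (deriv g) z / 2 * w1 h g z)

noncomputable def ub (h g : ℂ → ℂ) (z : ℂ) : ℂ := -(deriv (deriv h) z / 2 * wb h g z)

noncomputable def vb (h g : ℂ → ℂ) (z : ℂ) : ℂ := -(deriv (deriv g) z / 2 * wb h g z)

noncomputable def A1 (h g : ℂ → ℂ) (z : ℂ) : ℂ :=
  conj (ub h g z) * harm h g z + conj (uF h g z) * deriv h z -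
    (conj (vb h g z) * conj (harm h g z) + conj (vF h g z) * deriv g z)

noncomputable def AbW (h g : ℂ → ℂ) (z : ℂ) : ℂ :=
  conj (u1 h g z) * harm h g z + conj (uF h g z) * conj (deriv g z) -
    (conj (v1 h g z) * conj (harm h g z) + conj (vF h g z) * conj (deriv h z))

noncomputable def B1 (h g : ℂ → ℂ) (z : ℂ) : ℂ :=
  u1 h g z * conj (uF h g z) + uF h g z * conj (ub h g z) -
    (v1 h g z * conj (vF h g z) + vF h g z * conj (vb h g z))

noncomputable def Bb (h g : ℂ → ℂ) (z : ℂ) : ℂ :=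
  ub h g z * conj (uF h g z) + uF h g z * conj (u1 h g z) -
    (vb h g z * conj (vF h g z) + vF h g z * conj (v1 h g z))

noncomputable def Efn (h g : ℂ → ℂ) (z : ℂ) : ℂ :=
  1 - (A1 h g z * Bmap h g z - Amap h g z * B1 h g z) / (Bmap h g z * Bmap h g z)

/-! ### Pointwise algebraic identities -/

lemma absSqC (w : ℂ) : ((‖w‖ ^ 2 : ℝ) : ℂ) = w * conj w := by
  rw [Complex.mul_conj]
  norm_cast
  exact (Complex.normSq_eq_norm_sq w).symm

lemma jacC_eq (h g : ℂ → ℂ) (z : ℂ) :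
    jacC h g z = deriv h z * conj (deriv h z) - deriv g z * conj (deriv g z) := by
  rw [jacC, jac, Complex.ofReal_sub, absSqC, absSqC]

lemma jacC_fun (h g : ℂ → ℂ) :
    jacC h g = fun z => deriv h z * conj (deriv h z) - deriv g z * conj (deriv g z) :=
  funext (jacC_eq h g)

lemma Nmap_fun (h g : ℂ → ℂ) :
    Nmap h g = fun z => conj (deriv h z) * harm h g z - conj (deriv g z) * conj (harm h g z) := by
  funext z; rw [Nmap, map_mul]

lemma Amap_fun (h g : ℂ → ℂ) :
    Amap h g = fun z => conj (uF h g z) * harm h g z - conj (vF h g z) * conj (harm h g z) := by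
  funext z
  rw [Amap, uF, vF]
  simp only [map_sub, map_mul, map_div₀, map_ofNat, Complex.conj_conj]
  rw [jacC, Complex.conj_ofReal]

lemma Bmap_fun (h g : ℂ → ℂ) :
    Bmap h g = fun z => uF h g z * conj (uF h g z) - vF h g z * conj (vF h g z) := by
  funext z
  rw [Bmap, Complex.ofReal_sub, absSqC, absSqC, uF, vF]

theorem halleyMapH_derivs (h g : ℂ → ℂ) (U : Set ℂ) (hU : IsOpen U) (α : ℂ) (hα : α ∈ U)
    (hh : DifferentiableOn ℂ h U) (hg : DifferentiableOn ℂ g U)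
    (hJ : ∀ z ∈ U, jac h g z ≠ 0) (hzero : harm h g α = 0) :
    halleyMapH h g α = α ∧ wirtingerZ (halleyMapH h g) α = 0 ∧
      wirtingerZ (wirtingerZ (halleyMapH h g)) α = 0 := by
  have Hh : AnalyticOnNhd ℂ h U := hh.analyticOnNhd hU
  have Hg : AnalyticOnNhd ℂ g U := hg.analyticOnNhd hU
  have Hh1 := Hh.deriv; have Hh2 := Hh1.deriv; have Hh3 := Hh2.deriv
  have Hg1 := Hg.deriv; have Hg2 := Hg1.deriv; have Hg3 := Hg2.deriv
  -- basic differentiability and HasW facts at every point of U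
  have base : ∀ z, z ∈ U →
      HasW (harm h g) (deriv h z) (conj (deriv g z)) z ∧
      HasW (fun w => conj (harm h g w)) (deriv g z) (conj (deriv h z)) z ∧
      HasW (Nmap h g) (jacC h g z) (Nb h g z) z ∧
      HasW (jacC h g) (J1 h g z) (conj (J1 h g z)) z ∧
      HasW (uF h g) (u1 h g z) (ub h g z) z ∧
      HasW (vF h g) (v1 h g z) (vb h g z) z ∧
      HasW (Amap h g) (A1 h g z) (AbW h g z) z ∧
      HasW (Bmap h g) (B1 h g z) (Bb h g z) z := by
    intro z hz
    have Dh : DifferentiableAt ℂ h z := (Hh z hz).differentiableAt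
    have Dg : DifferentiableAt ℂ g z := (Hg z hz).differentiableAt
    have Dh1 : DifferentiableAt ℂ (deriv h) z := (Hh1 z hz).differentiableAt
    have Dg1 : DifferentiableAt ℂ (deriv g) z := (Hg1 z hz).differentiableAt
    have Dh2 : DifferentiableAt ℂ (deriv (deriv h)) z := (Hh2 z hz).differentiableAt
    have Dg2 : DifferentiableAt ℂ (deriv (deriv g)) z := (Hg2 z hz).differentiableAt
    have hJz : jacC h g z ≠ 0 := by
      simp only [jacC, ne_eq, Complex.ofReal_eq_zero]; exact hJ z hz
    have Wf : HasW (harm h g) (deriv h z) (conj (deriv g z)) z :=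
      ((hasW_holo Dh).add (hasW_holo Dg).conj).congr_coef (by simp) (by simp)
    have Wfb : HasW (fun w => conj (harm h g w)) (deriv g z) (conj (deriv h z)) z :=
      Wf.conj.congr_coef (by simp) rfl
    have WN : HasW (Nmap h g) (jacC h g z) (Nb h g z) z := by
      rw [Nmap_fun]
      exact (((hasW_holo Dh1).conj.mul Wf).sub ((hasW_holo Dg1).conj.mul Wfb)).congr_coef
        (by simp only [map_zero, zero_mul]; rw [jacC_eq]; ring) (by simp only [Nb]; try ring)
    have WJ : HasW (jacC h g) (J1 h g z) (conj (J1 h g z)) z := by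
      rw [jacC_fun]
      exact (((hasW_holo Dh1).mul (hasW_holo Dh1).conj).sub
        ((hasW_holo Dg1).mul (hasW_holo Dg1).conj)).congr_coef
        (by simp only [map_zero, mul_zero, add_zero, J1])
        (by simp only [J1, map_sub, map_mul, Complex.conj_conj]; ring)
    have Wwq : HasW (fun w => Nmap h g w / jacC h g w) (w1 h g z) (wb h g z) z :=
      (WN.div WJ hJz).congr_coef (by simp only [w1]) (by simp only [wb])
    have Wh2half : HasW (fun w => deriv (deriv h) w / 2) (deriv (deriv (deriv h)) z / 2) 0 z :=
      ((hasW_holo Dh2).div (hasW_const 2 z) two_ne_zero).congr_coef (by ring) (by ring)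
    have Wg2half : HasW (fun w => deriv (deriv g) w / 2) (deriv (deriv (deriv g)) z / 2) 0 z :=
      ((hasW_holo Dg2).div (hasW_const 2 z) two_ne_zero).congr_coef (by ring) (by ring)
    have WuF : HasW (uF h g) (u1 h g z) (ub h g z) z :=
      ((hasW_holo Dh1).sub (Wh2half.mul Wwq)).congr_coef
        (by simp only [u1]) (by simp only [ub]; try ring)
    have WvF : HasW (vF h g) (v1 h g z) (vb h g z) z :=
      ((hasW_holo Dg1).sub (Wg2half.mul Wwq)).congr_coef
        (by simp only [v1]) (by simp only [vb]; try ring)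
    have WA : HasW (Amap h g) (A1 h g z) (AbW h g z) z := by
      rw [Amap_fun]
      exact ((WuF.conj.mul Wf).sub (WvF.conj.mul Wfb)).congr_coef
        (by simp only [A1]) (by simp only [AbW])
    have WB : HasW (Bmap h g) (B1 h g z) (Bb h g z) z := by
      rw [Bmap_fun]
      exact ((WuF.mul WuF.conj).sub (WvF.mul WvF.conj)).congr_coef
        (by simp only [B1]) (by simp only [Bb])
    exact ⟨Wf, Wfb, WN, WJ, WuF, WvF, WA, WB⟩
  -- values at α
  have hJα : jacC h g α ≠ 0 := by
    simp only [jacC, ne_eq, Complex.ofReal_eq_zero]; exact hJ α hα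
  have hNα : Nmap h g α = 0 := by rw [Nmap, hzero]; simp
  have hfbα : conj (harm h g α) = 0 := by rw [hzero]; simp
  have huFα : uF h g α = deriv h α := by rw [uF, hNα]; simp
  have hvFα : vF h g α = deriv g α := by rw [vF, hNα]; simp
  have hNbα : Nb h g α = 0 := by rw [Nb, hfbα, hzero]; simp only [map_zero, mul_zero, zero_mul, add_zero, zero_add, sub_zero]; ring
  have hwbα : wb h g α = 0 := by rw [wb, hNα, hNbα]; simp
  have hubα : ub h g α = 0 := by rw [ub, hwbα]; simp
  have hvbα : vb h g α = 0 := by rw [vb, hwbα]; simp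
  have hw1α : w1 h g α = 1 := by
    rw [w1, hNα]; simp [div_self (mul_ne_zero hJα hJα)]
  have hu1α : u1 h g α = deriv (deriv h) α / 2 := by
    rw [u1, hNα, hw1α]; simp; ring
  have hv1α : v1 h g α = deriv (deriv g) α / 2 := by
    rw [v1, hNα, hw1α]; simp; ring
  have hA1α : A1 h g α = jacC h g α := by
    rw [A1, hubα, hvbα, huFα, hvFα, hfbα, hzero, jacC_eq]; simp; ring
  have hB1α : B1 h g α =
      (conj (deriv h α) * deriv (deriv h) α - conj (deriv g α) * deriv (deriv g) α) / 2 := by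
    rw [B1, hubα, hvbα, hu1α, hv1α, huFα, hvFα]; simp; ring
  have hAα : Amap h g α = 0 := by rw [Amap, hfbα, hzero]; simp
  have hBα : Bmap h g α = jacC h g α := by
    have := congrFun (Bmap_fun h g) α
    rw [this, huFα, hvFα, jacC_eq]
  have hBα0 : Bmap h g α ≠ 0 := by rw [hBα]; exact hJα
  obtain ⟨Wfα, Wfbα, WNα, WJα, WuFα, WvFα, WAα, WBα⟩ := base α hα
  -- Part 1
  have part1 : halleyMapH h g α = α := by rw [halleyMapH, hAα]; simp
  -- the first Wirtinger derivative as a function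
  have hwFE : ∀ z, z ∈ U → Bmap h g z ≠ 0 →
      wirtingerZ (halleyMapH h g) z = Efn h g z := by
    intro z hz hB
    obtain ⟨_, _, _, _, _, _, WA, WB⟩ := base z hz
    exact (((hasW_id z).sub (WA.div WB hB)).congr_coef (by simp only [Efn]) rfl).wz' rfl
  -- Part 2
  have part2 : wirtingerZ (halleyMapH h g) α = 0 := by
    rw [hwFE α hα hBα0, Efn, hA1α, hAα, hBα, zero_mul, sub_zero]
    field_simp
    simp
  -- eventual equality near α
  have hEv : wirtingerZ (halleyMapH h g) =ᶠ[nhds α] Efn h g := by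
    have hBcont : ContinuousAt (Bmap h g) α := WBα.diffAt.continuousAt
    filter_upwards [hBcont.eventually_ne hBα0, hU.mem_nhds hα] with z h1 h2
    exact hwFE z h2 h1
  -- HasW facts for the coefficient functions at α
  have Dh1α : DifferentiableAt ℂ (deriv h) α := (Hh1 α hα).differentiableAt
  have Dg1α : DifferentiableAt ℂ (deriv g) α := (Hg1 α hα).differentiableAt
  have Dh2α : DifferentiableAt ℂ (deriv (deriv h)) α := (Hh2 α hα).differentiableAt
  have Dg2α : DifferentiableAt ℂ (deriv (deriv g)) α := (Hg2 α hα).differentiableAt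
  have Dh3α : DifferentiableAt ℂ (deriv (deriv (deriv h))) α := (Hh3 α hα).differentiableAt
  have Dg3α : DifferentiableAt ℂ (deriv (deriv (deriv g))) α := (Hg3 α hα).differentiableAt
  have Wh1α := hasW_holo Dh1α
  have Wg1α := hasW_holo Dg1α
  have Wh2α := hasW_holo Dh2α
  have Wg2α := hasW_holo Dg2α
  have Wh3α := hasW_holo Dh3α
  have Wg3α := hasW_holo Dg3α
  have Wh2halfα : HasW (fun w => deriv (deriv h) w / 2) (deriv (deriv (deriv h)) α / 2) 0 α :=
    (Wh2α.div (hasW_const 2 α) two_ne_zero).congr_coef (by ring) (by ring)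
  have Wg2halfα : HasW (fun w => deriv (deriv g) w / 2) (deriv (deriv (deriv g)) α / 2) 0 α :=
    (Wg2α.div (hasW_const 2 α) two_ne_zero).congr_coef (by ring) (by ring)
  have Wh3halfα : HasW (fun w => deriv (deriv (deriv h)) w / 2)
      (deriv (deriv (deriv (deriv h))) α / 2) 0 α :=
    (Wh3α.div (hasW_const 2 α) two_ne_zero).congr_coef (by ring) (by ring)
  have Wg3halfα : HasW (fun w => deriv (deriv (deriv g)) w / 2)
      (deriv (deriv (deriv (deriv g))) α / 2) 0 α :=
    (Wg3α.div (hasW_const 2 α) two_ne_zero).congr_coef (by ring) (by ring)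
  obtain ⟨aJ1, bJ1, WJ1α⟩ : ∃ a b, HasW (J1 h g) a b α :=
    ⟨_, _, (Wh2α.mul Wh1α.conj).sub (Wg2α.mul Wg1α.conj)⟩
  obtain ⟨aNb, bNb, WNbα⟩ : ∃ a b, HasW (Nb h g) a b α :=
    ⟨_, _, ((Wh2α.conj.mul Wfα).add (Wh1α.conj.mul Wg1α.conj)).sub
      ((Wg2α.conj.mul Wfbα).add (Wg1α.conj.mul Wh1α.conj))⟩
  have hJJα : jacC h g α * jacC h g α ≠ 0 := mul_ne_zero hJα hJα
  obtain ⟨awb, bwb, Wwbα⟩ : ∃ a b, HasW (wb h g) a b α :=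
    ⟨_, _, ((WNbα.mul WJα).sub (WNα.mul WJ1α.conj)).div (WJα.mul WJα) hJJα⟩
  obtain ⟨aw1, bw1, Ww1α⟩ : ∃ a b, HasW (w1 h g) a b α :=
    ⟨_, _, ((WJα.mul WJα).sub (WNα.mul WJ1α)).div (WJα.mul WJα) hJJα⟩
  have Wwqα : HasW (fun w => Nmap h g w / jacC h g w) _ _ α := WNα.div WJα hJα
  obtain ⟨aub, bub, Wubα⟩ : ∃ a b, HasW (ub h g) a b α :=
    ⟨_, _, (Wh2halfα.mul Wwbα).neg⟩
  obtain ⟨avb, bvb, Wvbα⟩ : ∃ a b, HasW (vb h g) a b α :=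
    ⟨_, _, (Wg2halfα.mul Wwbα).neg⟩
  obtain ⟨au1, bu1, Wu1α⟩ : ∃ a b, HasW (u1 h g) a b α :=
    ⟨_, _, Wh2α.sub ((Wh3halfα.mul Wwqα).add (Wh2halfα.mul Ww1α))⟩
  obtain ⟨av1, bv1, Wv1α⟩ : ∃ a b, HasW (v1 h g) a b α :=
    ⟨_, _, Wg2α.sub ((Wg3halfα.mul Wwqα).add (Wg2halfα.mul Ww1α))⟩
  obtain ⟨sB1, tB1, WB1α⟩ : ∃ a b, HasW (B1 h g) a b α :=
    ⟨_, _, ((Wu1α.mul WuFα.conj).add (WuFα.mul Wubα.conj)).sub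
      ((Wv1α.mul WvFα.conj).add (WvFα.mul Wvbα.conj))⟩
  obtain ⟨tA1, WA1α⟩ : ∃ b, HasW (A1 h g)
      (conj (deriv h α) * deriv (deriv h) α - conj (deriv g α) * deriv (deriv g) α) b α :=
    ⟨_, (((Wubα.conj.mul Wfα).add (WuFα.conj.mul Wh1α)).sub
      ((Wvbα.conj.mul Wfbα).add (WvFα.conj.mul Wg1α))).congr_coef
      (by rw [hfbα, hzero, hubα, hvbα, huFα, hvFα]; simp; try ring) rfl⟩
  -- assemble the second derivative
  have WP := (WA1α.mul WBα).sub (WAα.mul WB1α)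
  have WQ := WBα.mul WBα
  have hQ0 : Bmap h g α * Bmap h g α ≠ 0 := mul_ne_zero hBα0 hBα0
  have WE := (hasW_const 1 α).sub (WP.div WQ hQ0)
  have part3 : wirtingerZ (wirtingerZ (halleyMapH h g)) α = 0 := by
    have eE : wirtingerZ (Efn h g) α = _ := WE.wz' rfl
    rw [wirtingerZ_congr hEv, eE]
    rw [hA1α, hAα, hBα, hB1α]
    field_simp
    ring
  exact ⟨part1, part2, part3⟩
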